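/- Let s be an s-number. Then the sequence of right convergents (R_n(s))_{n≥0} converges to a real number x, and the subtraction continued fraction of x recovers s: (ιx)_n = s_n for all n ∈ ℕ. -/

import Mathlib

/-- The remnants r_n(x): r_0(x) = x and r_{k+1}(x) = 1/((⌊r_k(x)⌋ + 1) − r_k(x)). -/
noncomputable def rem (x : ℝ) : ℕ → ℝ
  | 0 => x
  | k + 1 => 1 / (((⌊rem x k⌋ : ℝ) + 1) - rem x k)

/-- The subtraction continued fraction ιx: (ιx)_k = ⌊r_k(x)⌋ + 1, the unique
integer m with 0 < m − r_k(x) ≤ 1. -/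
noncomputable def iota (x : ℝ) (k : ℕ) : ℤ := ⌊rem x k⌋ + 1

/-- The 2×2 integer matrix V(m) = ((m, -1), (1, 0)). -/
def V (m : ℤ) : Matrix (Fin 2) (Fin 2) ℤ := !![m, -1; 1, 0]

/-- The matrix g_{n,s} = V(s 0) · V(s 1) ··· V(s n). -/
def gMat (s : ℕ → ℤ) (n : ℕ) : Matrix (Fin 2) (Fin 2) ℤ :=
  ((List.range (n + 1)).map fun i => V (s i)).prod

/-- The n-th right convergent R_n(s) = a_{n,s} / c_{n,s} as a real number. -/
noncomputable def R (s : ℕ → ℤ) (n : ℕ) : ℝ :=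
  (gMat s n 0 0 : ℝ) / (gMat s n 1 0 : ℝ)

/-- The n-th left convergent L_n(s) = (a_{n,s}+b_{n,s})/(c_{n,s}+d_{n,s}) as a real number. -/
noncomputable def L (s : ℕ → ℤ) (n : ℕ) : ℝ :=
  ((gMat s n 0 0 : ℝ) + (gMat s n 0 1 : ℝ)) / ((gMat s n 1 0 : ℝ) + (gMat s n 1 1 : ℝ))

/-- The n-th accuracy A_n(s) = (c_{n,s}+d_{n,s})·c_{n,s}, an integer. -/
def A (s : ℕ → ℤ) (n : ℕ) : ℤ :=
  (gMat s n 1 0 + gMat s n 1 1) * gMat s n 1 0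

/-!
Peeling off the first factor, g_{n+1,s} = V(s₀) · g_{n,s'} with s' the shifted sequence, so
the right convergents obey R_{n+1}(s) = s₀ − 1 / R_n(s'). By induction on n (for all s at
once) this gives s₀ − 1 < R_n(s) and that R(s) is decreasing; its limit x(s) then satisfies
x(s) = s₀ − 1 / x(s') with x(s') ≥ s₁ − 1 ≥ 1. Hence ⌊x(s)⌋ = s₀ − 1 and the first remnant
of x(s) is x(s'), and ιx(s) = s follows by induction.
-/

open Filter Topology

theorem rem_succ_eq_rem_rem_one (x : ℝ) (n : ℕ) : rem x (n + 1) = rem (rem x 1) n := by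
  induction n with
  | zero => rfl
  | succ n ih => rw [rem, ih, ← rem]

theorem iota_zero (x : ℝ) : iota x 0 = ⌊x⌋ + 1 := rfl

theorem iota_succ (x : ℝ) (n : ℕ) : iota x (n + 1) = iota (rem x 1) n := by
  rw [iota, iota, rem_succ_eq_rem_rem_one]

theorem gMat_zero (s : ℕ → ℤ) : gMat s 0 = V (s 0) := by
  simp [gMat]

theorem gMat_succ (s : ℕ → ℤ) (n : ℕ) :
    gMat s (n + 1) = V (s 0) * gMat (fun k => s (k + 1)) n := by
  rw [gMat, List.range_succ_eq_map]
  simp only [List.map_cons, List.map_map, List.prod_cons]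
  rfl

theorem R_zero (s : ℕ → ℤ) : R s 0 = s 0 := by
  simp [R, gMat_zero, V]

theorem gMat_succ_zero_zero (s : ℕ → ℤ) (n : ℕ) :
    gMat s (n + 1) 0 0 =
      s 0 * gMat (fun k => s (k + 1)) n 0 0 - gMat (fun k => s (k + 1)) n 1 0 := by
  simp [gMat_succ, V, Matrix.mul_apply]
  ring

theorem gMat_succ_one_zero (s : ℕ → ℤ) (n : ℕ) :
    gMat s (n + 1) 1 0 = gMat (fun k => s (k + 1)) n 0 0 := by
  simp [gMat_succ, V, Matrix.mul_apply]

theorem R_succ (s : ℕ → ℤ) (n : ℕ) (h : R (fun k => s (k + 1)) n ≠ 0) :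
    R s (n + 1) = s 0 - (R (fun k => s (k + 1)) n)⁻¹ := by
  obtain ⟨ha, -⟩ := div_ne_zero_iff.mp h
  rw [R, gMat_succ_zero_zero, gMat_succ_one_zero, R, inv_div]
  push_cast
  field_simp

-- The right convergents of an s-number decrease, so their limit is their infimum.
noncomputable def convergentLimit (s : ℕ → ℤ) : ℝ := ⨅ n, R s n

section

variable {s : ℕ → ℤ}

theorem sub_one_lt_R (hs : ∀ n, 2 ≤ s (n + 1)) (n : ℕ) : (s 0 : ℝ) - 1 < R s n := by
  induction n generalizing s with
  | zero => simp [R_zero]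
  | succ n ih =>
    have h1 : (1 : ℝ) < R (fun k => s (k + 1)) n := by
      have := ih (s := fun k => s (k + 1)) (fun k => hs (k + 1))
      have : (2 : ℝ) ≤ s 1 := by exact_mod_cast hs 0
      linarith
    rw [R_succ s n (by positivity)]
    have : (R (fun k => s (k + 1)) n)⁻¹ < 1 := inv_lt_one_of_one_lt₀ h1
    linarith

theorem one_lt_R_shift (hs : ∀ n, 2 ≤ s (n + 1)) (n : ℕ) : 1 < R (fun k => s (k + 1)) n := by
  have := sub_one_lt_R (s := fun k => s (k + 1)) (fun k => hs (k + 1)) n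
  have : (2 : ℝ) ≤ s 1 := by exact_mod_cast hs 0
  linarith

theorem R_antitone (hs : ∀ n, 2 ≤ s (n + 1)) : Antitone (R s) := by
  refine antitone_nat_of_succ_le fun n => ?_
  induction n generalizing s with
  | zero =>
    rw [R_succ s 0 (zero_lt_one.trans (one_lt_R_shift hs 0)).ne', R_zero s]
    exact sub_le_self _ (inv_nonneg.mpr (zero_le_one.trans (one_lt_R_shift hs 0).le))
  | succ n ih =>
    have hn := one_lt_R_shift hs n
    have hn1 := one_lt_R_shift hs (n + 1)
    rw [R_succ s (n + 1) (zero_lt_one.trans hn1).ne',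
      R_succ s n (zero_lt_one.trans hn).ne', sub_le_sub_iff_left]
    exact inv_anti₀ (by linarith) (ih (s := fun k => s (k + 1)) fun k => hs (k + 1))

theorem R_bddBelow (hs : ∀ n, 2 ≤ s (n + 1)) : BddBelow (Set.range (R s)) :=
  ⟨s 0 - 1, Set.forall_mem_range.mpr fun n => (sub_one_lt_R hs n).le⟩

theorem tendsto_R_convergentLimit (hs : ∀ n, 2 ≤ s (n + 1)) :
    Tendsto (R s) atTop (𝓝 (convergentLimit s)) :=
  tendsto_atTop_ciInf (R_antitone hs) (R_bddBelow hs)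

theorem sub_one_le_convergentLimit (hs : ∀ n, 2 ≤ s (n + 1)) :
    (s 0 : ℝ) - 1 ≤ convergentLimit s :=
  le_ciInf fun n => (sub_one_lt_R hs n).le

theorem one_le_convergentLimit_shift (hs : ∀ n, 2 ≤ s (n + 1)) :
    1 ≤ convergentLimit (fun k => s (k + 1)) := by
  have := sub_one_le_convergentLimit (s := fun k => s (k + 1)) fun k => hs (k + 1)
  have : (2 : ℝ) ≤ s 1 := by exact_mod_cast hs 0
  linarith

theorem convergentLimit_eq (hs : ∀ n, 2 ≤ s (n + 1)) :
    convergentLimit s = s 0 - (convergentLimit (fun k => s (k + 1)))⁻¹ := by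
  have hshift := tendsto_R_convergentLimit (s := fun k => s (k + 1)) fun k => hs (k + 1)
  have hne : convergentLimit (fun k => s (k + 1)) ≠ 0 :=
    (zero_lt_one.trans_le (one_le_convergentLimit_shift hs)).ne'
  refine tendsto_nhds_unique
    ((tendsto_R_convergentLimit hs).comp (tendsto_add_atTop_nat 1)) ?_
  have hR : (fun n => R s (n + 1)) = fun n => s 0 - (R (fun k => s (k + 1)) n)⁻¹ :=
    funext fun n => R_succ s n (zero_lt_one.trans (one_lt_R_shift hs n)).ne'
  simpa only [Function.comp_def, hR] using tendsto_const_nhds.sub (hshift.inv₀ hne)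

theorem floor_convergentLimit (hs : ∀ n, 2 ≤ s (n + 1)) :
    ⌊convergentLimit s⌋ = s 0 - 1 := by
  have h1 := one_le_convergentLimit_shift hs
  have hinv_pos : 0 < (convergentLimit (fun k => s (k + 1)))⁻¹ := by positivity
  have hinv_le : (convergentLimit (fun k => s (k + 1)))⁻¹ ≤ 1 := inv_le_one_of_one_le₀ h1
  rw [Int.floor_eq_iff, convergentLimit_eq hs]
  push_cast
  constructor <;> linarith

theorem rem_one_convergentLimit (hs : ∀ n, 2 ≤ s (n + 1)) :
    rem (convergentLimit s) 1 = convergentLimit (fun k => s (k + 1)) := by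
  rw [rem, rem, floor_convergentLimit hs, convergentLimit_eq hs]
  push_cast
  simp

theorem iota_convergentLimit (hs : ∀ n, 2 ≤ s (n + 1)) (n : ℕ) :
    iota (convergentLimit s) n = s n := by
  induction n generalizing s with
  | zero => rw [iota_zero, floor_convergentLimit hs]; ring
  | succ n ih =>
    rw [iota_succ, rem_one_convergentLimit hs]
    exact ih fun k => hs (k + 1)

end

/-- For an s-number s, the sequence of right convergents converges
to a real number x with ιx = s. -/
theorem stmt_14 (s : ℕ → ℤ) (hs : ∀ n : ℕ, 1 ≤ n → 2 ≤ s n) :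
    ∃ x : ℝ, Filter.Tendsto (fun n : ℕ => R s n) Filter.atTop (nhds x) ∧
      ∀ n : ℕ, iota x n = s n := by
  have hs' : ∀ n, 2 ≤ s (n + 1) := fun n => hs (n + 1) n.succ_pos
  exact ⟨convergentLimit s, tendsto_R_convergentLimit hs', iota_convergentLimit hs'⟩
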